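/- arXiv:2111.13560 — 3 statements merged into one kernel-verified Lean document; each statement's English description precedes it below -/
import Mathlib

section
/- Let n be a nonnegative integer and let θ₁, …, θ_k be real angles all contained in a closed interval [ϑ − π/2, ϑ + π/2] of length π centered at some angle ϑ. Define p_m = Σ_{j=1}^k e^{i m θ_j}. Then |p_{2n+1}| ≤ (2n+1) · |p₁|. -/
/-!
Write `z_j = e^{iθ_j}` and `w = e^{iϑ}`, so that `Re (z_j w̄) = cos (θ_j - ϑ) ≥ 0`. For unit `z, w`,
`z^{m+2} + w² z^m = z^{m+1} w (z w̄ + z̄ w)` has modulus `2 Re (z w̄)`, hence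
`|p_{m+2}| ≤ |p_m| + 2 Re (w̄ p_1) ≤ |p_m| + 2 |p_1|`, and induction over odd `m` gives the bound.
-/

open Real ComplexConjugate

namespace Complex

theorem norm_pow_add_two_add_sq_mul_pow {z w : ℂ} (hz : ‖z‖ = 1) (hw : ‖w‖ = 1) (m : ℕ) :
    ‖z ^ (m + 2) + w ^ 2 * z ^ m‖ = 2 * |(z * conj w).re| := by
  have hzz : z * conj z = 1 := by rw [mul_conj', hz]; simp
  have hww : w * conj w = 1 := by rw [mul_conj', hw]; simp
  have hre : (2 * (z * conj w).re : ℂ) = z * conj w + conj (z * conj w) := by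
    rw [add_conj]; push_cast; ring
  have hfactor : z ^ (m + 2) + w ^ 2 * z ^ m = z ^ (m + 1) * w * (2 * (z * conj w).re) := by
    rw [hre, map_mul, conj_conj]
    linear_combination z ^ (m + 2) * hww.symm + w ^ 2 * z ^ m * hzz.symm
  rw [hfactor, norm_mul, norm_mul, norm_pow, hz, hw, one_pow, one_mul, one_mul]
  norm_cast
  rw [Real.norm_eq_abs, abs_mul, abs_two]

section HalfPlane

variable {ι : Type*} (s : Finset ι) {z : ι → ℂ} {w : ℂ}
  (hz : ∀ i ∈ s, ‖z i‖ = 1) (hw : ‖w‖ = 1) (hzw : ∀ i ∈ s, 0 ≤ (z i * conj w).re)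
include hz hw hzw

theorem norm_sum_pow_add_two_le (m : ℕ) :
    ‖∑ i ∈ s, z i ^ (m + 2)‖ ≤ ‖∑ i ∈ s, z i ^ m‖ + 2 * ‖∑ i ∈ s, z i‖ := by
  have hsplit : ∑ i ∈ s, z i ^ (m + 2) =
      ∑ i ∈ s, (z i ^ (m + 2) + w ^ 2 * z i ^ m) - w ^ 2 * ∑ i ∈ s, z i ^ m := by
    rw [Finset.mul_sum, ← Finset.sum_sub_distrib]
    simp
  have hpaired : ‖∑ i ∈ s, (z i ^ (m + 2) + w ^ 2 * z i ^ m)‖ ≤ 2 * ‖∑ i ∈ s, z i‖ := calc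
    _ ≤ ∑ i ∈ s, ‖z i ^ (m + 2) + w ^ 2 * z i ^ m‖ := norm_sum_le _ _
    _ = 2 * ((∑ i ∈ s, z i) * conj w).re := by
      rw [Finset.sum_mul, re_sum, Finset.mul_sum]
      refine Finset.sum_congr rfl fun i hi => ?_
      rw [norm_pow_add_two_add_sq_mul_pow (hz i hi) hw, abs_of_nonneg (hzw i hi)]
    _ ≤ 2 * ‖∑ i ∈ s, z i‖ := by
      grw [re_le_norm, norm_mul, norm_conj, hw, mul_one]
  calc ‖∑ i ∈ s, z i ^ (m + 2)‖
      ≤ ‖∑ i ∈ s, (z i ^ (m + 2) + w ^ 2 * z i ^ m)‖ + ‖w ^ 2 * ∑ i ∈ s, z i ^ m‖ := by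
        rw [hsplit]
        exact norm_sub_le _ _
    _ ≤ ‖∑ i ∈ s, z i ^ m‖ + 2 * ‖∑ i ∈ s, z i‖ := by
        rw [norm_mul, norm_pow, hw, one_pow, one_mul]
        linarith

theorem norm_sum_pow_odd_le (n : ℕ) :
    ‖∑ i ∈ s, z i ^ (2 * n + 1)‖ ≤ (2 * n + 1) * ‖∑ i ∈ s, z i‖ := by
  induction n with
  | zero => simp
  | succ n ih =>
    have hstep := norm_sum_pow_add_two_le s hz hw hzw (2 * n + 1)
    rw [show 2 * (n + 1) + 1 = 2 * n + 1 + 2 by ring]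
    push_cast
    linarith

end HalfPlane

theorem re_exp_mul_I_mul_conj_exp_mul_I (θ ϑ : ℝ) :
    (exp (θ * I) * conj (exp (ϑ * I))).re = Real.cos (θ - ϑ) := by
  rw [← exp_conj, ← exp_add, map_mul, conj_ofReal, conj_I, ← exp_ofReal_mul_I_re]
  push_cast
  ring_nf

end Complex

/-- If all angles `θ j` lie in a closed interval of length `π` centered at `ϑ`, then
`|∑ e^{i(2n+1)θ_j}| ≤ (2n+1)·|∑ e^{iθ_j}|`. -/
theorem stmt0 (n k : ℕ) (ϑ : ℝ) (θ : Fin k → ℝ)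
    (hθ : ∀ j, θ j ∈ Set.Icc (ϑ - π / 2) (ϑ + π / 2)) :
    ‖∑ j : Fin k, Complex.exp (Complex.I * ((2 * (n : ℂ) + 1) * (θ j : ℂ)))‖ ≤
      (2 * (n : ℝ) + 1) * ‖∑ j : Fin k, Complex.exp (Complex.I * (θ j : ℂ))‖ := by
  have hpow : ∀ j, Complex.exp (Complex.I * ((2 * (n : ℂ) + 1) * θ j)) =
      Complex.exp (θ j * Complex.I) ^ (2 * n + 1) := fun j => by
    rw [← Complex.exp_nat_mul]
    push_cast
    ring_nf
  simp only [hpow, mul_comm Complex.I (θ _ : ℂ)]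
  refine Complex.norm_sum_pow_odd_le _ (fun j _ => Complex.norm_exp_ofReal_mul_I _)
    (Complex.norm_exp_ofReal_mul_I ϑ) (fun j _ => ?_) n
  rw [Complex.re_exp_mul_I_mul_conj_exp_mul_I]
  exact Real.cos_nonneg_of_mem_Icc ⟨by linarith [(hθ j).1], by linarith [(hθ j).2]⟩
end

section
/- Let v₁, v₂, v₃, v₄ be four points in ℂ, forming triangles N = (v₁, v₂, v₃) and S = (v₂, v₁, v₄) sharing edge v₁v₂, and the 'flipped' triangles E = (v₃, v₄, v₂) and W = (v₄, v₃, v₁) sharing edge v₃v₄, with all four triangles non-degenerate. Let F be a complex-valued function on {v₁, v₂, v₃, v₄}. Then the four conditions ∇F(N) = ∇F(S), ∇F(E) = ∇F(W), ∇̄F(N) = ∇̄F(S), and ∇̄F(E) = ∇̄F(W) are all equivalent. -/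
open ComplexConjugate

/-- Signed area of the triangle with vertices `z₁, z₂, z₃`. -/
noncomputable def triArea (z₁ z₂ z₃ : ℂ) : ℂ :=
  (z₂ * conj z₁ - z₁ * conj z₂ + z₃ * conj z₂ - z₂ * conj z₃ + z₁ * conj z₃ - z₃ * conj z₁) /
    (4 * Complex.I)

/-- Discrete holomorphic derivative `∇F` on the triangle `(z₁, z₂, z₃)`. -/
noncomputable def dNabla (z₁ z₂ z₃ φ₁ φ₂ φ₃ : ℂ) : ℂ :=
  Complex.I * (φ₁ * (conj z₂ - conj z₃) + φ₂ * (conj z₃ - conj z₁) + φ₃ * (conj z₁ - conj z₂)) /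
    (4 * triArea z₁ z₂ z₃)

/-- Discrete antiholomorphic derivative `∇̄F` on the triangle `(z₁, z₂, z₃)`. -/
noncomputable def dNablaBar (z₁ z₂ z₃ φ₁ φ₂ φ₃ : ℂ) : ℂ :=
  -Complex.I * (φ₁ * (z₂ - z₃) + φ₂ * (z₃ - z₁) + φ₃ * (z₁ - z₂)) /
    (4 * triArea z₁ z₂ z₃)

private lemma clear_iff (c x y u v : ℂ) (hc : c ≠ 0) (hu : u ≠ 0) (hv : v ≠ 0) :
    c * x / (4 * u) = c * y / (4 * v) ↔ x * v = y * u := by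
  rw [div_eq_div_iff (mul_ne_zero (by norm_num) hu) (mul_ne_zero (by norm_num) hv)]
  constructor
  · intro h
    have h4c : (4 : ℂ) * c ≠ 0 := mul_ne_zero (by norm_num) hc
    apply mul_left_cancel₀ h4c
    linear_combination h
  · intro h
    linear_combination 4 * c * h

/-- For four points forming triangles `N = (v₁,v₂,v₃)`, `S = (v₂,v₁,v₄)` and the flipped
triangles `E = (v₃,v₄,v₂)`, `W = (v₄,v₃,v₁)` (all non-degenerate), the conditions
`∇F(N)=∇F(S)`, `∇F(E)=∇F(W)`, `∇̄F(N)=∇̄F(S)`, `∇̄F(E)=∇̄F(W)` are all equivalent. -/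
theorem stmt12 (z₁ z₂ z₃ z₄ F₁ F₂ F₃ F₄ : ℂ)
    (hN : triArea z₁ z₂ z₃ ≠ 0) (hS : triArea z₂ z₁ z₄ ≠ 0)
    (hE : triArea z₃ z₄ z₂ ≠ 0) (hW : triArea z₄ z₃ z₁ ≠ 0) :
    List.TFAE
      [dNabla z₁ z₂ z₃ F₁ F₂ F₃ = dNabla z₂ z₁ z₄ F₂ F₁ F₄,
        dNabla z₃ z₄ z₂ F₃ F₄ F₂ = dNabla z₄ z₃ z₁ F₄ F₃ F₁,
        dNablaBar z₁ z₂ z₃ F₁ F₂ F₃ = dNablaBar z₂ z₁ z₄ F₂ F₁ F₄,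
        dNablaBar z₃ z₄ z₂ F₃ F₄ F₂ = dNablaBar z₄ z₃ z₁ F₄ F₃ F₁] := by
  have hI : (Complex.I : ℂ) ≠ 0 := Complex.I_ne_zero
  have hnI : (-Complex.I : ℂ) ≠ 0 := neg_ne_zero.mpr Complex.I_ne_zero
  have hz12 : z₁ - z₂ ≠ 0 := by
    intro h
    apply hN
    rw [sub_eq_zero] at h
    rw [triArea, h]
    ring
  have hz34 : z₃ - z₄ ≠ 0 := by
    intro h
    apply hE
    rw [sub_eq_zero] at h
    rw [triArea, h]
    ring
  have hw12 : conj z₁ - conj z₂ ≠ 0 := by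
    intro h
    exact hz12 (by simpa using congrArg conj h)
  have hw34 : conj z₃ - conj z₄ ≠ 0 := by
    intro h
    exact hz34 (by simpa using congrArg conj h)
  have e1 := clear_iff Complex.I
    (F₁ * (conj z₂ - conj z₃) + F₂ * (conj z₃ - conj z₁) + F₃ * (conj z₁ - conj z₂))
    (F₂ * (conj z₁ - conj z₄) + F₁ * (conj z₄ - conj z₂) + F₄ * (conj z₂ - conj z₁))
    (triArea z₁ z₂ z₃) (triArea z₂ z₁ z₄) hI hN hS
  have e2 := clear_iff Complex.I
    (F₃ * (conj z₄ - conj z₂) + F₄ * (conj z₂ - conj z₃) + F₂ * (conj z₃ - conj z₄))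
    (F₄ * (conj z₃ - conj z₁) + F₃ * (conj z₁ - conj z₄) + F₁ * (conj z₄ - conj z₃))
    (triArea z₃ z₄ z₂) (triArea z₄ z₃ z₁) hI hE hW
  have e3 := clear_iff (-Complex.I)
    (F₁ * (z₂ - z₃) + F₂ * (z₃ - z₁) + F₃ * (z₁ - z₂))
    (F₂ * (z₁ - z₄) + F₁ * (z₄ - z₂) + F₄ * (z₂ - z₁))
    (triArea z₁ z₂ z₃) (triArea z₂ z₁ z₄) hnI hN hS
  have e4 := clear_iff (-Complex.I)
    (F₃ * (z₄ - z₂) + F₄ * (z₂ - z₃) + F₂ * (z₃ - z₄))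
    (F₄ * (z₃ - z₁) + F₃ * (z₁ - z₄) + F₁ * (z₄ - z₃))
    (triArea z₃ z₄ z₂) (triArea z₄ z₃ z₁) hnI hE hW
  tfae_have 1 ↔ 3 := by
    rw [show dNabla z₁ z₂ z₃ F₁ F₂ F₃ = dNabla z₂ z₁ z₄ F₂ F₁ F₄ ↔ _ from e1,
        show dNablaBar z₁ z₂ z₃ F₁ F₂ F₃ = dNablaBar z₂ z₁ z₄ F₂ F₁ F₄ ↔ _ from e3]
    constructor
    · intro h
      have h5 : ((F₁ * (z₂ - z₃) + F₂ * (z₃ - z₁) + F₃ * (z₁ - z₂)) * triArea z₂ z₁ z₄ -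
          (F₂ * (z₁ - z₄) + F₁ * (z₄ - z₂) + F₄ * (z₂ - z₁)) * triArea z₁ z₂ z₃) *
          (conj z₁ - conj z₂) = 0 := by
        simp only [triArea] at h ⊢
        linear_combination (z₁ - z₂) * h
      rcases mul_eq_zero.mp h5 with h6 | h6
      · exact sub_eq_zero.mp h6
      · exact absurd h6 hw12
    · intro h
      have h5 : ((F₁ * (conj z₂ - conj z₃) + F₂ * (conj z₃ - conj z₁) + F₃ * (conj z₁ - conj z₂)) *
          triArea z₂ z₁ z₄ -
          (F₂ * (conj z₁ - conj z₄) + F₁ * (conj z₄ - conj z₂) + F₄ * (conj z₂ - conj z₁)) *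
          triArea z₁ z₂ z₃) * (z₁ - z₂) = 0 := by
        simp only [triArea] at h ⊢
        linear_combination (conj z₁ - conj z₂) * h
      rcases mul_eq_zero.mp h5 with h6 | h6
      · exact sub_eq_zero.mp h6
      · exact absurd h6 hz12
  tfae_have 1 ↔ 2 := by
    rw [show dNabla z₁ z₂ z₃ F₁ F₂ F₃ = dNabla z₂ z₁ z₄ F₂ F₁ F₄ ↔ _ from e1,
        show dNabla z₃ z₄ z₂ F₃ F₄ F₂ = dNabla z₄ z₃ z₁ F₄ F₃ F₁ ↔ _ from e2]
    constructor
    · intro h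
      have h5 : ((F₃ * (conj z₄ - conj z₂) + F₄ * (conj z₂ - conj z₃) + F₂ * (conj z₃ - conj z₄)) *
          triArea z₄ z₃ z₁ -
          (F₄ * (conj z₃ - conj z₁) + F₃ * (conj z₁ - conj z₄) + F₁ * (conj z₄ - conj z₃)) *
          triArea z₃ z₄ z₂) * (conj z₁ - conj z₂) = 0 := by
        simp only [triArea] at h ⊢
        linear_combination -(conj z₃ - conj z₄) * h
      rcases mul_eq_zero.mp h5 with h6 | h6
      · exact sub_eq_zero.mp h6
      · exact absurd h6 hw12
    · intro h
      have h5 : ((F₁ * (conj z₂ - conj z₃) + F₂ * (conj z₃ - conj z₁) + F₃ * (conj z₁ - conj z₂)) *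
          triArea z₂ z₁ z₄ -
          (F₂ * (conj z₁ - conj z₄) + F₁ * (conj z₄ - conj z₂) + F₄ * (conj z₂ - conj z₁)) *
          triArea z₁ z₂ z₃) * (conj z₃ - conj z₄) = 0 := by
        simp only [triArea] at h ⊢
        linear_combination -(conj z₁ - conj z₂) * h
      rcases mul_eq_zero.mp h5 with h6 | h6
      · exact sub_eq_zero.mp h6
      · exact absurd h6 hw34
  tfae_have 3 ↔ 4 := by
    rw [show dNablaBar z₁ z₂ z₃ F₁ F₂ F₃ = dNablaBar z₂ z₁ z₄ F₂ F₁ F₄ ↔ _ from e3,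
        show dNablaBar z₃ z₄ z₂ F₃ F₄ F₂ = dNablaBar z₄ z₃ z₁ F₄ F₃ F₁ ↔ _ from e4]
    constructor
    · intro h
      have h5 : ((F₃ * (z₄ - z₂) + F₄ * (z₂ - z₃) + F₂ * (z₃ - z₄)) * triArea z₄ z₃ z₁ -
          (F₄ * (z₃ - z₁) + F₃ * (z₁ - z₄) + F₁ * (z₄ - z₃)) * triArea z₃ z₄ z₂) *
          (z₁ - z₂) = 0 := by
        simp only [triArea] at h ⊢
        linear_combination -(z₃ - z₄) * h
      rcases mul_eq_zero.mp h5 with h6 | h6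
      · exact sub_eq_zero.mp h6
      · exact absurd h6 hz12
    · intro h
      have h5 : ((F₁ * (z₂ - z₃) + F₂ * (z₃ - z₁) + F₃ * (z₁ - z₂)) * triArea z₂ z₁ z₄ -
          (F₂ * (z₁ - z₄) + F₁ * (z₄ - z₂) + F₄ * (z₂ - z₁)) * triArea z₁ z₂ z₃) *
          (z₃ - z₄) = 0 := by
        simp only [triArea] at h ⊢
        linear_combination -(z₁ - z₂) * h
      rcases mul_eq_zero.mp h5 with h6 | h6
      · exact sub_eq_zero.mp h6
      · exact absurd h6 hz34
  tfae_finish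
end

section
/- Let M₁ > 0, M₂ > 0 and R₀ > 0 be real constants, and let R: [0, ε_max) → (0, ∞) be a continuous, piecewise continuously differentiable function with R(0) = R₀ satisfying |R'(ε)| ≤ 4·M̄₁(ε)·R(ε) + 16·M̄₂(ε)·R(ε)², where M̄₁(ε) = M₁/(1 − 2εM₁) and M̄₂(ε) = M₂/(1 − 2εM₁)³, for all ε in the interval where 1 − 2εM₁ > 0. Then R(ε) ≥ R̄₋(ε) := R₀(1 − 2M₁ε)² / (1 + (8M₂R₀/M₁)·log(1/(1 − 2M₁ε))) for all ε with 0 ≤ ε < 1/(2M₁) in the domain, where R̄₋ is the solution of the ODE R̄₋' = −(4M̄₁ R̄₋ + 16M̄₂ R̄₋²) with R̄₋(0) = R₀. -/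
/-!
With `u(ε) = 1 − 2M₁ε`, the substitution `w = u²/R` linearizes the comparison: the lower half of
the derivative bound gives `w' ≤ 16M₂/u`, and `u²/R̄₋ = (1 + (8M₂R₀/M₁)·log(1/u))/R₀` has exactly
this derivative. Hence `u²/R − u²/R̄₋` is antitone on `[0, ε]` (on each piece between the finitely
many exceptional points, glued by continuity) and vanishes at `0`.
-/

/-- `M̄₁(ε) = M₁/(1 − 2εM₁)`. -/
noncomputable def Mbar₁ (M₁ ε : ℝ) : ℝ := M₁ / (1 - 2 * ε * M₁)

/-- `M̄₂(ε) = M₂/(1 − 2εM₁)³`. -/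
noncomputable def Mbar₂ (M₁ M₂ ε : ℝ) : ℝ := M₂ / (1 - 2 * ε * M₁) ^ 3

/-- The lower comparison function
`R̄₋(ε) = R₀(1 − 2M₁ε)² / (1 + (8M₂R₀/M₁)·log(1/(1 − 2M₁ε)))`. -/
noncomputable def Rlow (M₁ M₂ R₀ ε : ℝ) : ℝ :=
  R₀ * (1 - 2 * M₁ * ε) ^ 2 / (1 + (8 * M₂ * R₀ / M₁) * Real.log (1 / (1 - 2 * M₁ * ε)))

open Set

theorem antitoneOn_Icc_of_hasDerivAt_nonpos_off_finite {f f' : ℝ → ℝ} {a b : ℝ} {s : Set ℝ}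
    (hs : s.Finite) (hf : ContinuousOn f (Icc a b))
    (hf' : ∀ x ∈ Ioo a b \ s, HasDerivAt f (f' x) x)
    (hf'_nonpos : ∀ x ∈ Ioo a b \ s, f' x ≤ 0) : AntitoneOn f (Icc a b) := by
  induction s, hs using Set.Finite.induction_on generalizing a b with
  | empty =>
    refine antitoneOn_of_hasDerivWithinAt_nonpos (f' := f') (convex_Icc a b) hf
      (fun x hx ↦ ?_) fun x hx ↦ ?_ <;> rw [interior_Icc] at *
    · exact (hf' x ⟨hx, notMem_empty x⟩).hasDerivWithinAt
    · exact hf'_nonpos x ⟨hx, notMem_empty x⟩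
  | @insert c s _ _ ih =>
    have restrict {l r : ℝ} (hlr : Ioo l r ⊆ Ioo a b) (hcl : c ∉ Ioo l r)
        (hfl : ContinuousOn f (Icc l r)) : AntitoneOn f (Icc l r) := by
      have h : Ioo l r \ s ⊆ Ioo a b \ insert c s :=
        fun x hx ↦ ⟨hlr hx.1, by rintro (rfl | h); exacts [hcl hx.1, hx.2 h]⟩
      exact ih hfl (fun x hx ↦ hf' x (h hx)) fun x hx ↦ hf'_nonpos x (h hx)
    by_cases hc : c ∈ Ioo a b
    · rw [← Icc_union_Icc_eq_Icc hc.1.le hc.2.le] at hf ⊢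
      refine AntitoneOn.union_right ?_ ?_ (isGreatest_Icc hc.1.le) (isLeast_Icc hc.2.le)
      · exact restrict (Ioo_subset_Ioo_right hc.2.le) (fun h ↦ lt_irrefl c h.2)
          (hf.mono subset_union_left)
      · exact restrict (Ioo_subset_Ioo_left hc.1.le) (fun h ↦ lt_irrefl c h.1)
          (hf.mono subset_union_right)
    · exact restrict subset_rfl hc hf

noncomputable def rlowDenom (M₁ M₂ R₀ t : ℝ) : ℝ :=
  1 + (8 * M₂ * R₀ / M₁) * Real.log (1 / (1 - 2 * M₁ * t))

theorem rlow_eq (M₁ M₂ R₀ t : ℝ) :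
    Rlow M₁ M₂ R₀ t = R₀ * (1 - 2 * M₁ * t) ^ 2 / rlowDenom M₁ M₂ R₀ t :=
  rfl

@[simp]
theorem rlowDenom_zero (M₁ M₂ R₀ : ℝ) : rlowDenom M₁ M₂ R₀ 0 = 1 := by
  simp [rlowDenom]

theorem one_le_rlowDenom {M₁ M₂ R₀ t : ℝ} (hM₁ : 0 < M₁) (hM₂ : 0 ≤ M₂) (hR₀ : 0 ≤ R₀)
    (ht : 0 ≤ t) (htM₁ : 2 * t * M₁ < 1) : 1 ≤ rlowDenom M₁ M₂ R₀ t := by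
  have hlog : 0 ≤ Real.log (1 / (1 - 2 * M₁ * t)) :=
    Real.log_nonneg <| (one_le_div (by linarith)).2 (by nlinarith)
  exact le_add_of_nonneg_right (mul_nonneg (by positivity) hlog)

theorem hasDerivAt_one_sub_two_mul (M₁ t : ℝ) :
    HasDerivAt (fun t ↦ 1 - 2 * M₁ * t) (-(2 * M₁)) t := by
  simpa using ((hasDerivAt_id t).const_mul (2 * M₁)).const_sub 1

theorem hasDerivAt_one_sub_two_mul_sq (M₁ t : ℝ) :
    HasDerivAt (fun t ↦ (1 - 2 * M₁ * t) ^ 2) (-(4 * M₁ * (1 - 2 * M₁ * t))) t :=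
  ((hasDerivAt_one_sub_two_mul M₁ t).pow 2).congr_deriv (by ring)

theorem hasDerivAt_rlowDenom {M₁ t : ℝ} (M₂ R₀ : ℝ) (hM₁ : M₁ ≠ 0) (hu : 1 - 2 * M₁ * t ≠ 0) :
    HasDerivAt (rlowDenom M₁ M₂ R₀) (16 * M₂ * R₀ / (1 - 2 * M₁ * t)) t := by
  have hlog :
      HasDerivAt (fun t ↦ Real.log (1 / (1 - 2 * M₁ * t))) (2 * M₁ / (1 - 2 * M₁ * t)) t := by
    simp only [one_div, Real.log_inv]
    exact ((hasDerivAt_one_sub_two_mul M₁ t).log hu).neg.congr_deriv (by ring)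
  exact ((hlog.const_mul _).const_add 1).congr_deriv (by field_simp; ring)

theorem hasDerivAt_rlow {M₁ M₂ R₀ t : ℝ} (hM₁ : 0 < M₁) (hM₂ : 0 ≤ M₂) (hR₀ : 0 ≤ R₀)
    (ht : 0 ≤ t) (htM₁ : 2 * t * M₁ < 1) :
    HasDerivAt (Rlow M₁ M₂ R₀)
      (-(4 * Mbar₁ M₁ t * Rlow M₁ M₂ R₀ t + 16 * Mbar₂ M₁ M₂ t * Rlow M₁ M₂ R₀ t ^ 2)) t := by
  have hu : 1 - 2 * M₁ * t ≠ 0 := by nlinarith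
  have hg := (zero_lt_one.trans_le (one_le_rlowDenom hM₁ hM₂ hR₀ ht htM₁)).ne'
  have hRlow := ((hasDerivAt_one_sub_two_mul_sq M₁ t).const_mul R₀).div
    (hasDerivAt_rlowDenom M₂ R₀ hM₁.ne' hu) hg
  refine hRlow.congr_deriv ?_
  rw [rlow_eq, Mbar₁, Mbar₂, show 1 - 2 * t * M₁ = 1 - 2 * M₁ * t by ring]
  field_simp
  ring

theorem deriv_sq_div_sub_rlowDenom_nonpos {M₁ M₂ R₀ t r r' : ℝ} (hR₀ : R₀ ≠ 0)
    (hu : 0 < 1 - 2 * M₁ * t) (hr : 0 < r)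
    (h : -r' ≤ 4 * Mbar₁ M₁ t * r + 16 * Mbar₂ M₁ M₂ t * r ^ 2) :
    (-(4 * M₁ * (1 - 2 * M₁ * t)) * r - (1 - 2 * M₁ * t) ^ 2 * r') / r ^ 2
      - 16 * M₂ * R₀ / (1 - 2 * M₁ * t) / R₀ ≤ 0 := by
  have hfactor : (-(4 * M₁ * (1 - 2 * M₁ * t)) * r - (1 - 2 * M₁ * t) ^ 2 * r') / r ^ 2
      - 16 * M₂ * R₀ / (1 - 2 * M₁ * t) / R₀
      = ((1 - 2 * M₁ * t) / r) ^ 2 * (-r' - (4 * Mbar₁ M₁ t * r + 16 * Mbar₂ M₁ M₂ t * r ^ 2)) := by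
    rw [Mbar₁, Mbar₂, show 1 - 2 * t * M₁ = 1 - 2 * M₁ * t by ring]
    generalize 1 - 2 * M₁ * t = u at hu ⊢
    have := hu.ne'
    field_simp
    ring
  rw [hfactor]
  exact mul_nonpos_of_nonneg_of_nonpos (sq_nonneg _) (sub_nonpos.2 h)

theorem rlow_le_of_neg_deriv_le {M₁ M₂ R₀ x : ℝ} {R R' : ℝ → ℝ} {S : Set ℝ}
    (hM₁ : 0 < M₁) (hM₂ : 0 ≤ M₂) (hR₀ : 0 < R₀) (hS : S.Finite)
    (hx : 0 ≤ x) (hxM₁ : 2 * x * M₁ < 1)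
    (hRcont : ContinuousOn R (Icc 0 x)) (hRpos : ∀ t ∈ Icc 0 x, 0 < R t) (hR0 : R 0 = R₀)
    (hderiv : ∀ t ∈ Ioo 0 x \ S, HasDerivAt R (R' t) t)
    (hbound : ∀ t ∈ Ioo 0 x \ S,
      -R' t ≤ 4 * Mbar₁ M₁ t * R t + 16 * Mbar₂ M₁ M₂ t * R t ^ 2) :
    Rlow M₁ M₂ R₀ x ≤ R x := by
  have hu : ∀ t ∈ Icc 0 x, 0 < 1 - 2 * M₁ * t := fun t ht ↦ by nlinarith [ht.2]
  have hv := antitoneOn_Icc_of_hasDerivAt_nonpos_off_finite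
    (f := fun t ↦ (1 - 2 * M₁ * t) ^ 2 / R t - rlowDenom M₁ M₂ R₀ t / R₀) hS ?cont
    (fun t ht ↦ ((hasDerivAt_one_sub_two_mul_sq M₁ t).div (hderiv t ht)
      (hRpos t (Ioo_subset_Icc_self ht.1)).ne').sub
      ((hasDerivAt_rlowDenom M₂ R₀ hM₁.ne' (hu t (Ioo_subset_Icc_self ht.1)).ne').div_const R₀))
    fun t ht ↦ deriv_sq_div_sub_rlowDenom_nonpos hR₀.ne' (hu t (Ioo_subset_Icc_self ht.1))
      (hRpos t (Ioo_subset_Icc_self ht.1)) (hbound t ht)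
  case cont =>
    refine (Continuous.continuousOn (by fun_prop)).div hRcont (fun t ht ↦ (hRpos t ht).ne')
      |>.sub (ContinuousOn.div_const (fun t ht ↦ ?_) R₀)
    exact (hasDerivAt_rlowDenom M₂ R₀ hM₁.ne' (hu t ht).ne').continuousAt.continuousWithinAt
  have hvx : (1 - 2 * M₁ * x) ^ 2 / R x - rlowDenom M₁ M₂ R₀ x / R₀
      ≤ (1 - 2 * M₁ * 0) ^ 2 / R 0 - rlowDenom M₁ M₂ R₀ 0 / R₀ :=
    hv ⟨le_rfl, hx⟩ ⟨hx, le_rfl⟩ hx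
  rw [rlowDenom_zero, hR0, mul_zero, sub_zero, one_pow, sub_self, sub_nonpos,
    div_le_div_iff₀ (hRpos x ⟨hx, le_rfl⟩) hR₀] at hvx
  rw [rlow_eq, div_le_iff₀ (zero_lt_one.trans_le (one_le_rlowDenom hM₁ hM₂ hR₀.le hx hxM₁))]
  linarith

/-- Grönwall-type comparison: a positive, continuous, piecewise-`C¹` function `R` with
`R(0) = R₀` and `|R'| ≤ 4M̄₁R + 16M̄₂R²` satisfies `R(ε) ≥ R̄₋(ε)`; moreover `R̄₋` solves the
lower-comparison ODE `R̄₋' = −(4M̄₁R̄₋ + 16M̄₂R̄₋²)` with `R̄₋(0) = R₀`. -/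
theorem stmt18 (M₁ M₂ R₀ εmax : ℝ) (hM₁ : 0 < M₁) (hM₂ : 0 < M₂) (hR₀ : 0 < R₀)
    (R R' : ℝ → ℝ) (S : Set ℝ) (hS : S.Finite)
    (hRcont : ContinuousOn R (Set.Ico 0 εmax))
    (hRpos : ∀ ε ∈ Set.Ico 0 εmax, 0 < R ε)
    (hR0 : R 0 = R₀)
    (hderiv : ∀ ε ∈ Set.Ico 0 εmax, ε ∉ S → 2 * ε * M₁ < 1 → HasDerivAt R (R' ε) ε)
    (hbound : ∀ ε ∈ Set.Ico 0 εmax, ε ∉ S → 2 * ε * M₁ < 1 →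
      |R' ε| ≤ 4 * Mbar₁ M₁ ε * R ε + 16 * Mbar₂ M₁ M₂ ε * R ε ^ 2) :
    (∀ ε ∈ Set.Ico 0 εmax, 2 * ε * M₁ < 1 → Rlow M₁ M₂ R₀ ε ≤ R ε) ∧
      ∀ ε : ℝ, 0 ≤ ε → 2 * ε * M₁ < 1 →
        HasDerivAt (Rlow M₁ M₂ R₀)
          (-(4 * Mbar₁ M₁ ε * Rlow M₁ M₂ R₀ ε + 16 * Mbar₂ M₁ M₂ ε * Rlow M₁ M₂ R₀ ε ^ 2)) ε := by
  refine ⟨fun x hx hxM₁ ↦ ?_, fun ε hε hεM₁ ↦ hasDerivAt_rlow hM₁ hM₂.le hR₀.le hε hεM₁⟩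
  have hIcc : Icc 0 x ⊆ Ico 0 εmax := Icc_subset_Ico_right hx.2
  have hIoo {t} (ht : t ∈ Ioo 0 x \ S) : t ∈ Ico 0 εmax ∧ t ∉ S ∧ 2 * t * M₁ < 1 :=
    ⟨hIcc (Ioo_subset_Icc_self ht.1), ht.2, by nlinarith [ht.1.2]⟩
  refine rlow_le_of_neg_deriv_le (R' := R') hM₁ hM₂.le hR₀ hS hx.1 hxM₁ (hRcont.mono hIcc)
    (fun t ht ↦ hRpos t (hIcc ht)) hR0 (fun t ht ↦ ?_) (fun t ht ↦ ?_) <;>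
    obtain ⟨htI, htS, htM₁⟩ := hIoo ht
  · exact hderiv t htI htS htM₁
  · exact neg_le.1 (abs_le.1 (hbound t htI htS htM₁)).1
end
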